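/- arXiv:1009.2109 — 6 statements merged into one kernel-verified Lean document; each statement's English description precedes it below -/
import Mathlib

section
/- Place n ≥ 3 points p₀, …, p_{n−1} at the vertices of a regular n-gon inscribed in a circle, i.e., p_k = (cos(2πk/n), sin(2πk/n)). Then for any vertex p_i and any two distinct other vertices p_j, p_k, the angle at p_i in the configuration (angle between segments p_i p_j and p_i p_k) is at least π/n. -/
open Real EuclideanGeometry

/-!
With `P θ = (cos θ, sin θ)`, the sum-to-product formulas give
`⟪P a - P b, P c - P b⟫ = 4 sin ((a - b) / 2) sin ((c - b) / 2) cos ((a - c) / 2)` and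
`‖P a - P b‖ = 2 |sin ((a - b) / 2)|`, so the angle at `P b` has `|cos| = |cos ((a - c) / 2)|`
(the inscribed angle theorem). For vertices of the regular `n`-gon, `(a - c) / 2 = π d / n` with
`1 ≤ |d| ≤ n - 1`, hence `|cos| ≤ cos (π / n)`.
-/

lemma abs_cos_le_cos_of_le_abs {s t : ℝ} (hs : 0 ≤ s) (hst : s ≤ |t|) (hts : |t| ≤ π - s) :
    |cos t| ≤ cos s := by
  rw [← cos_abs t, abs_le]
  constructor
  · rw [neg_le, ← cos_pi_sub]
    exact cos_le_cos_of_nonneg_of_le_pi hs (by linarith) (by linarith)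
  · exact cos_le_cos_of_nonneg_of_le_pi hs (by linarith [pi_pos]) hst

lemma sin_ne_zero_of_abs_mem_Ioo {t : ℝ} (h0 : 0 < |t|) (hπ : |t| < π) : sin t ≠ 0 := by
  rw [ne_eq, sin_eq_zero_iff_of_lt_of_lt (neg_lt_of_abs_lt hπ) (lt_of_abs_lt hπ)]
  exact abs_pos.mp h0

lemma le_angle_of_cos_angle_le {V P : Type*} [NormedAddCommGroup V] [InnerProductSpace ℝ V]
    [MetricSpace P] [NormedAddTorsor V P] {x y z : P} {s : ℝ} (hs0 : 0 ≤ s) (hsπ : s ≤ π)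
    (h : cos (∠ x y z) ≤ cos s) : s ≤ ∠ x y z :=
  (strictAntiOn_cos.le_iff_ge ⟨angle_nonneg x y z, angle_le_pi x y z⟩ ⟨hs0, hsπ⟩).1 h

lemma abs_pi_mul_sub_div_mem_Icc {n a b : ℕ} (ha : a < n) (hb : b < n) (hab : a ≠ b) :
    |π * (a - b) / n| ∈ Set.Icc (π / n) (π - π / n) := by
  have hn : (0 : ℝ) < n := by exact_mod_cast ha.pos
  have h1 : 1 ≤ |(a : ℝ) - b| := by
    have : (1 : ℤ) ≤ |(a : ℤ) - b| := Int.one_le_abs (sub_ne_zero.mpr (by exact_mod_cast hab))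
    exact_mod_cast this
  have h2 : |(a : ℝ) - b| ≤ n - 1 := by
    have ha' : (a : ℝ) + 1 ≤ n := by exact_mod_cast ha
    have hb' : (b : ℝ) + 1 ≤ n := by exact_mod_cast hb
    rw [abs_sub_le_iff]
    constructor <;> linarith [(a.cast_nonneg : (0 : ℝ) ≤ a), (b.cast_nonneg : (0 : ℝ) ≤ b)]
  rw [abs_div, abs_mul, abs_of_pos pi_pos, Nat.abs_cast, Set.mem_Icc]
  constructor
  · exact div_le_div_of_nonneg_right (by nlinarith [pi_pos]) hn.le
  · rw [le_sub_iff_add_le, ← add_div, div_le_iff₀ hn]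
    nlinarith [pi_pos]

noncomputable def unitCirclePoint (θ : ℝ) : EuclideanSpace ℝ (Fin 2) :=
  (EuclideanSpace.equiv (Fin 2) ℝ).symm ![cos θ, sin θ]

@[simp] lemma unitCirclePoint_apply_zero (θ : ℝ) : unitCirclePoint θ 0 = cos θ := rfl

@[simp] lemma unitCirclePoint_apply_one (θ : ℝ) : unitCirclePoint θ 1 = sin θ := rfl

lemma inner_unitCirclePoint_sub (a b c : ℝ) :
    inner ℝ (unitCirclePoint a - unitCirclePoint b) (unitCirclePoint c - unitCirclePoint b)
      = 4 * sin ((a - b) / 2) * sin ((c - b) / 2) * cos ((a - c) / 2) := by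
  simp only [PiLp.inner_apply, PiLp.sub_apply, RCLike.inner_apply, conj_trivial, Fin.sum_univ_two,
    unitCirclePoint_apply_zero, unitCirclePoint_apply_one]
  rw [cos_sub_cos, cos_sub_cos, sin_sub_sin, sin_sub_sin,
    show (a - c) / 2 = (a + b) / 2 - (c + b) / 2 by ring, cos_sub]
  ring

lemma norm_unitCirclePoint_sub (a b : ℝ) :
    ‖unitCirclePoint a - unitCirclePoint b‖ = 2 * |sin ((a - b) / 2)| := by
  rw [EuclideanSpace.norm_eq, Fin.sum_univ_two, sqrt_eq_iff_eq_sq (by positivity) (by positivity)]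
  simp only [PiLp.sub_apply, norm_eq_abs, sq_abs, unitCirclePoint_apply_zero,
    unitCirclePoint_apply_one]
  rw [cos_sub_cos, sin_sub_sin]
  linear_combination (4 * sin ((a - b) / 2) ^ 2) * sin_sq_add_cos_sq ((a + b) / 2)
    - 4 * sq_abs (sin ((a - b) / 2))

lemma abs_cos_angle_unitCirclePoint {a b c : ℝ} (hab : sin ((a - b) / 2) ≠ 0)
    (hcb : sin ((c - b) / 2) ≠ 0) :
    |cos (∠ (unitCirclePoint a) (unitCirclePoint b) (unitCirclePoint c))|
      = |cos ((a - c) / 2)| := by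
  rw [angle, InnerProductGeometry.cos_angle, vsub_eq_sub, vsub_eq_sub, inner_unitCirclePoint_sub,
    norm_unitCirclePoint_sub, norm_unitCirclePoint_sub]
  simp only [abs_div, abs_mul, abs_abs, abs_two, abs_of_pos (four_pos : (0 : ℝ) < 4)]
  field_simp
  ring

theorem regular_ngon_angular_resolution_general (n : ℕ)
    (p : ℕ → EuclideanSpace ℝ (Fin 2))
    (hp : ∀ k : ℕ, p k = (EuclideanSpace.equiv (Fin 2) ℝ).symm
      ![Real.cos (2 * π * k / n), Real.sin (2 * π * k / n)])
    (i j k : ℕ) (hi : i < n) (hj : j < n) (hk : k < n)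
    (hji : j ≠ i) (hki : k ≠ i) (hjk : j ≠ k) :
    π / n ≤ ∠ (p j) (p i) (p k) := by
  have hP : ∀ m : ℕ, p m = unitCirclePoint (2 * π * m / n) := hp
  have half_arc (a b : ℕ) : (2 * π * a / n - 2 * π * b / n) / 2 = π * (a - b) / n := by ring
  have hn : (1 : ℝ) ≤ n := by exact_mod_cast hi.pos
  have hπn : 0 < π / n := div_pos pi_pos (by linarith)
  have sin_half_arc_ne_zero {a : ℕ} (ha : a < n) (hai : a ≠ i) :
      sin ((2 * π * a / n - 2 * π * i / n) / 2) ≠ 0 := by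
    obtain ⟨hlow, hhigh⟩ := abs_pi_mul_sub_div_mem_Icc ha hi hai
    rw [half_arc]
    exact sin_ne_zero_of_abs_mem_Ioo (hπn.trans_le hlow) (by linarith)
  obtain ⟨hlow, hhigh⟩ := abs_pi_mul_sub_div_mem_Icc hj hk hjk
  refine le_angle_of_cos_angle_le hπn.le (div_le_self pi_pos.le hn) ((le_abs_self _).trans ?_)
  rw [hP, hP, hP, abs_cos_angle_unitCirclePoint (sin_half_arc_ne_zero hj hji)
    (sin_half_arc_ne_zero hk hki), half_arc]
  exact abs_cos_le_cos_of_le_abs hπn.le hlow hhigh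

/-- Place `n ≥ 3` points at the vertices of a regular `n`-gon inscribed in the unit circle,
`p k = (cos (2πk/n), sin (2πk/n))`.  Then for any vertex `p i` and any two distinct other
vertices `p j`, `p k`, the angle `∠ (p j) (p i) (p k)` is at least `π/n`. -/
theorem regular_ngon_angular_resolution (n : ℕ) (hn : 3 ≤ n)
    (p : ℕ → EuclideanSpace ℝ (Fin 2))
    (hp : ∀ k : ℕ, p k = (EuclideanSpace.equiv (Fin 2) ℝ).symm
      ![Real.cos (2 * π * k / n), Real.sin (2 * π * k / n)])
    (i j k : ℕ) (hi : i < n) (hj : j < n) (hk : k < n)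
    (hji : j ≠ i) (hki : k ≠ i) (hjk : j ≠ k) :
    π / n ≤ ∠ (p j) (p i) (p k) :=
  regular_ngon_angular_resolution_general n p hp i j k hi hj hk hji hki hjk
end

section
/- The circular drawing of K_n on the regular n-gon has total resolution at least π/n, i.e., every angle between two edges sharing an endpoint is at least π/n and every angle at a crossing of two disjoint edges is at least 2π/n. -/
open Real EuclideanGeometry InnerProductGeometry RealInnerProductSpace

/-!
Place vertex `k` at angle `θₖ = 2πk/n` on the unit circle. By the sum-to-product formulas,
`⟪p b - p a, p d - p c⟫ = 4 sin ((θ_b - θ_a)/2) sin ((θ_d - θ_c)/2) cos ((θ_a + θ_b - θ_c - θ_d)/2)`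
while `‖p b - p a‖ = 2 |sin ((θ_b - θ_a)/2)|`, so the two chords meet at an angle whose cosine is
`± cos (π m / n)` with `m = a + b - c - d`. This angle is at least `r π / n` as soon as
`r ≤ |m| ≤ n - r`. At a vertex `i` with neighbours `j ≠ k`, `|m| = |j - k| ∈ [1, n - 1]`; at the
crossing of the chords `i i'` and `j j'` with `i < j < i' < j'`, `m = (j - i) + (j' - i')` lies
in `[2, n - 2]`.
-/

lemma abs_cos_le_cos_of_le_abs_s5 {x r : ℝ} (hr : 0 ≤ r) (hrx : r ≤ |x|) (hx : |x| ≤ π - r) :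
    |cos x| ≤ cos r := by
  rw [← cos_abs x, abs_le]
  constructor
  · have h := cos_le_cos_of_nonneg_of_le_pi (hr.trans hrx) (by linarith) hx
    rw [cos_pi_sub] at h
    linarith
  · exact cos_le_cos_of_nonneg_of_le_pi hr (by linarith) hrx

lemma exists_sub_eq_smul_of_mem_segment {V : Type*} [AddCommGroup V] [Module ℝ V] {x y c : V}
    (hc : c ∈ segment ℝ x y) : ∃ s t : ℝ, x - c = s • (y - x) ∧ y - c = t • (y - x) := by
  obtain ⟨a, b, -, -, hab, rfl⟩ := hc
  obtain rfl : b = 1 - a := by linarith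
  exact ⟨a - 1, a, by module, by module⟩

section InnerProductSpace

variable {E : Type*} [NormedAddCommGroup E] [InnerProductSpace ℝ E]

lemma le_angle_of_inner_le {v w : E} {r : ℝ} (hr : 0 ≤ r) (hr' : r ≤ π / 2)
    (h : ⟪v, w⟫ ≤ cos r * (‖v‖ * ‖w‖)) : r ≤ InnerProductGeometry.angle v w := by
  rcases eq_or_ne v 0 with rfl | hv
  · rw [angle_zero_left]; exact hr'
  rcases eq_or_ne w 0 with rfl | hw
  · rw [angle_zero_right]; exact hr'
  have hcos : cos (angle v w) ≤ cos r := by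
    rw [cos_angle, div_le_iff₀ (by positivity)]
    exact h
  exact (strictAntiOn_cos.le_iff_ge ⟨angle_nonneg v w, angle_le_pi v w⟩
    ⟨hr, by linarith [pi_pos]⟩).1 hcos

lemma abs_inner_smul_smul_le {x y : E} {c : ℝ} (h : |⟪x, y⟫| ≤ c * (‖x‖ * ‖y‖)) (s t : ℝ) :
    |⟪s • x, t • y⟫| ≤ c * (‖s • x‖ * ‖t • y‖) := by
  rw [real_inner_smul_left, real_inner_smul_right, norm_smul, norm_smul, abs_mul, abs_mul,
    norm_eq_abs, norm_eq_abs]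
  calc |s| * (|t| * |⟪x, y⟫|) = (|s| * |t|) * |⟪x, y⟫| := by ring
    _ ≤ (|s| * |t|) * (c * (‖x‖ * ‖y‖)) := by gcongr
    _ = c * (|s| * ‖x‖ * (|t| * ‖y‖)) := by ring

end InnerProductSpace

noncomputable def circlePoint (θ : ℝ) : EuclideanSpace ℝ (Fin 2) :=
  (EuclideanSpace.equiv (Fin 2) ℝ).symm ![cos θ, sin θ]

lemma inner_circlePoint_sub (α β γ δ : ℝ) :
    ⟪circlePoint β - circlePoint α, circlePoint δ - circlePoint γ⟫ =
      4 * sin ((β - α) / 2) * sin ((δ - γ) / 2) * cos ((α + β - γ - δ) / 2) := by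
  have h : ⟪circlePoint β - circlePoint α, circlePoint δ - circlePoint γ⟫ =
      (cos β - cos α) * (cos δ - cos γ) + (sin β - sin α) * (sin δ - sin γ) := by
    simp [circlePoint, PiLp.inner_apply, Fin.sum_univ_two]
    ring
  rw [h, cos_sub_cos, cos_sub_cos, sin_sub_sin, sin_sub_sin,
    show (α + β - γ - δ) / 2 = (β + α) / 2 - (δ + γ) / 2 by ring, cos_sub]
  ring

lemma norm_circlePoint_sub (α β : ℝ) :
    ‖circlePoint β - circlePoint α‖ = 2 * |sin ((β - α) / 2)| := by
  have h := inner_circlePoint_sub α β α β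
  rw [real_inner_self_eq_norm_sq, show (α + β - α - β) / 2 = 0 by ring, cos_zero] at h
  rw [← sqrt_sq (norm_nonneg _), h, ← sqrt_sq (by positivity : 0 ≤ 2 * |sin ((β - α) / 2)|),
    mul_pow, sq_abs]
  ring_nf

lemma abs_inner_circlePoint_sub (α β γ δ : ℝ) :
    |⟪circlePoint β - circlePoint α, circlePoint δ - circlePoint γ⟫| =
      |cos ((α + β - γ - δ) / 2)| *
        (‖circlePoint β - circlePoint α‖ * ‖circlePoint δ - circlePoint γ‖) := by
  rw [inner_circlePoint_sub, norm_circlePoint_sub, norm_circlePoint_sub, abs_mul, abs_mul, abs_mul,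
    abs_of_pos (by norm_num : (0 : ℝ) < 4)]
  ring

noncomputable def regularPolygonVertex (n k : ℕ) : EuclideanSpace ℝ (Fin 2) :=
  circlePoint (2 * π * k / n)

lemma abs_inner_regularPolygonVertex_sub_le {n a b c d r : ℕ}
    (hr : r ≤ (a + b - c - d : ℤ).natAbs) (hn : (a + b - c - d : ℤ).natAbs + r ≤ n) :
    |⟪regularPolygonVertex n b - regularPolygonVertex n a,
        regularPolygonVertex n d - regularPolygonVertex n c⟫| ≤
      cos (r * π / n) * (‖regularPolygonVertex n b - regularPolygonVertex n a‖ *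
        ‖regularPolygonVertex n d - regularPolygonVertex n c‖) := by
  set m : ℤ := a + b - c - d
  unfold regularPolygonVertex
  rw [abs_inner_circlePoint_sub]
  have harg : (2 * π * a / n + 2 * π * b / n - 2 * π * c / n - 2 * π * d / n) / 2 = π * m / n := by
    simp only [m]; push_cast; ring
  rw [harg]
  gcongr
  have hm : (m.natAbs : ℝ) = |(m : ℝ)| := by rw [Nat.cast_natAbs, Int.cast_abs]
  have hr' : (r : ℝ) ≤ |(m : ℝ)| := by rw [← hm]; exact_mod_cast hr
  have hn' : |(m : ℝ)| + r ≤ n := by rw [← hm]; exact_mod_cast hn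
  have habs : |π * m / n| = π * |(m : ℝ)| / n := by
    rw [abs_div, abs_mul, abs_of_pos pi_pos, Nat.abs_cast]
  apply abs_cos_le_cos_of_le_abs_s5 (by positivity) <;> rw [habs]
  · exact div_le_div_of_nonneg_right (by nlinarith [pi_pos]) n.cast_nonneg
  · rcases n.eq_zero_or_pos with rfl | hpos
    · simp [pi_pos.le]
    · rw [le_sub_iff_add_le, ← add_div, div_le_iff₀ (by positivity)]
      nlinarith [pi_pos]

lemma le_angle_smul_regularPolygonVertex_sub {n a b c d r : ℕ}
    (hr : r ≤ (a + b - c - d : ℤ).natAbs) (hn : (a + b - c - d : ℤ).natAbs + r ≤ n) (s t : ℝ) :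
    r * π / n ≤ InnerProductGeometry.angle
      (s • (regularPolygonVertex n b - regularPolygonVertex n a))
      (t • (regularPolygonVertex n d - regularPolygonVertex n c)) := by
  have h2r : (2 * r : ℝ) ≤ n := by exact_mod_cast (by omega : 2 * r ≤ n)
  refine le_angle_of_inner_le (by positivity)
    (div_le_of_le_mul₀ n.cast_nonneg (by positivity) (by nlinarith [pi_pos])) ?_
  exact (le_abs_self _).trans
    (abs_inner_smul_smul_le (abs_inner_regularPolygonVertex_sub_le hr hn) s t)

theorem complete_graph_total_resolution_general (n : ℕ)
    (p : ℕ → EuclideanSpace ℝ (Fin 2))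
    (hp : ∀ k : ℕ, p k = (EuclideanSpace.equiv (Fin 2) ℝ).symm
      ![Real.cos (2 * π * k / n), Real.sin (2 * π * k / n)]) :
    (∀ i j k : ℕ, i < n → j < n → k < n → j ≠ i → k ≠ i → j ≠ k →
      π / n ≤ ∠ (p j) (p i) (p k)) ∧
    (∀ i j i' j' : ℕ, i < j → j < i' → i' < j' → j' < n →
      ∀ c : EuclideanSpace ℝ (Fin 2),
        c ∈ segment ℝ (p i) (p i') → c ∈ segment ℝ (p j) (p j') →
        2 * π / n ≤ ∠ (p j') c (p i') ∧ 2 * π / n ≤ ∠ (p j) c (p i')) := by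
  obtain rfl : p = regularPolygonVertex n := funext hp
  refine ⟨fun i j k _ hj hk _ _ hjk => ?_, fun i j i' j' hij hji' hi'j' hj'n c hci hcj => ?_⟩
  · simpa [EuclideanGeometry.angle] using le_angle_smul_regularPolygonVertex_sub
      (n := n) (a := i) (b := j) (c := i) (d := k) (r := 1) (by omega) (by omega) 1 1
  · obtain ⟨-, t, -, ht⟩ := exists_sub_eq_smul_of_mem_segment hci
    obtain ⟨s, s', hs, hs'⟩ := exists_sub_eq_smul_of_mem_segment hcj
    have key (u v : ℝ) := le_angle_smul_regularPolygonVertex_sub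
      (n := n) (a := j) (b := j') (c := i) (d := i') (r := 2) (by omega) (by omega) u v
    push_cast at key
    exact ⟨by simpa [EuclideanGeometry.angle, hs', ht] using key s' t,
      by simpa [EuclideanGeometry.angle, hs, ht] using key s t⟩

/-- The circular drawing of `K_n` on the regular `n`-gon (vertex `k` at
`(cos (2πk/n), sin (2πk/n))`) has total resolution at least `π/n`: every angle between two
edges sharing an endpoint is at least `π/n`, and every angle at a crossing of two disjoint
edges is at least `2π/n`. -/
theorem complete_graph_total_resolution (n : ℕ) (hn : 3 ≤ n)
    (p : ℕ → EuclideanSpace ℝ (Fin 2))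
    (hp : ∀ k : ℕ, p k = (EuclideanSpace.equiv (Fin 2) ℝ).symm
      ![Real.cos (2 * π * k / n), Real.sin (2 * π * k / n)]) :
    (∀ i j k : ℕ, i < n → j < n → k < n → j ≠ i → k ≠ i → j ≠ k →
      π / n ≤ ∠ (p j) (p i) (p k)) ∧
    (∀ i j i' j' : ℕ, i < j → j < i' → i' < j' → j' < n →
      ∀ c : EuclideanSpace ℝ (Fin 2),
        c ∈ segment ℝ (p i) (p i') → c ∈ segment ℝ (p j) (p j') →
        2 * π / n ≤ ∠ (p j') c (p i') ∧ 2 * π / n ≤ ∠ (p j) c (p i')) :=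
  complete_graph_total_resolution_general n p hp
end

section
/- Let H > 0 and 0 < a₁ ≤ a₂ ≤ … ≤ a_{m−1} be positive reals with a₁ + ⋯ + a_{m−1} ≤ H. Define angles φ'_k for k = 1, …, m−1 by tan(φ'₁ + ⋯ + φ'_k) = (a_{m−1} + a_{m−2} + ⋯ + a_{m−k})/H with each partial sum of the φ'_k in (0, π/2). Then φ'_k > φ'_{k+1} for all 1 ≤ k ≤ m−2. -/
/-!
Write `θ_k = φ'_1 + ⋯ + φ'_k`, so that `θ_k = arctan (s_k / H)` with
`s_k = a_{m-1} + ⋯ + a_{m-k}`, and `φ'_{k+1} = θ_{k+1} - θ_k`. The points `s_k / H` are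
nonnegative with positive, nonincreasing gaps `a_{m-k-1} / H ≤ a_{m-k} / H`, and `arctan` is
strictly concave on `[0, ∞)`, so its increments over such a sequence of points strictly decrease.
-/

open Real Finset

lemma strictConcaveOn_arctan_Ici : StrictConcaveOn ℝ (Set.Ici 0) arctan := by
  refine StrictAntiOn.strictConcaveOn_of_deriv (convex_Ici 0) continuous_arctan.continuousOn ?_
  rw [interior_Ici, Real.deriv_arctan]
  intro x (hx : 0 < x) y _ hxy
  dsimp only
  gcongr

lemma arctan_sub_lt_arctan_sub {x y z : ℝ} (hx : 0 ≤ x) (hxy : x < y) (hzy : z - y ≤ y - x) :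
    arctan z - arctan y < arctan y - arctan x := by
  have hgap : 0 < arctan y - arctan x := sub_pos.mpr (arctan_strictMono hxy)
  rcases le_or_gt z y with hz | hyz
  · linarith [arctan_strictMono.monotone hz]
  have hslope := (strictConcaveOn_iff_slope_strict_anti_adjacent.mp strictConcaveOn_arctan_Ici).2
    (Set.mem_Ici.mpr hx) (Set.mem_Ici.mpr (by linarith)) hxy hyz
  calc arctan z - arctan y
      < (arctan y - arctan x) / (y - x) * (z - y) := (div_lt_iff₀ (by linarith)).mp hslope
    _ ≤ (arctan y - arctan x) / (y - x) * (y - x) := by gcongr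
    _ = arctan y - arctan x := div_mul_cancel₀ _ (by linarith)

lemma sum_Icc_sub_succ_eq_add {M : Type*} [AddCommMonoid M] (a : ℕ → M) {m k : ℕ} (hk : k < m) :
    ∑ i ∈ Icc (m - (k + 1)) (m - 1), a i = a (m - (k + 1)) + ∑ i ∈ Icc (m - k) (m - 1), a i := by
  rw [Icc_eq_cons_Ioc (by omega), sum_cons, ← Icc_add_one_left_eq_Ioc,
    show m - (k + 1) + 1 = m - k by omega]

theorem phi_strict_anti_general (m : ℕ) (H : ℝ) (hH : 0 < H)
    (a φ' : ℕ → ℝ)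
    (hapos : ∀ i : ℕ, 1 ≤ i → i ≤ m - 1 → 0 < a i)
    (hamono : ∀ i : ℕ, 1 ≤ i → i + 1 ≤ m - 1 → a i ≤ a (i + 1))
    (hrange : ∀ k : ℕ, 1 ≤ k → k ≤ m - 1 →
      (∑ j ∈ Finset.Icc 1 k, φ' j) ∈ Set.Ioo 0 (π / 2))
    (htan : ∀ k : ℕ, 1 ≤ k → k ≤ m - 1 →
      Real.tan (∑ j ∈ Finset.Icc 1 k, φ' j) = (∑ j ∈ Finset.Icc (m - k) (m - 1), a j) / H) :
    ∀ k : ℕ, 1 ≤ k → k ≤ m - 2 → φ' (k + 1) < φ' k := by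
  intro k hk hkm
  obtain ⟨k, rfl⟩ := Nat.exists_eq_add_of_le' hk
  set θ : ℕ → ℝ := fun j => ∑ i ∈ Icc 1 j, φ' i with hθ
  set s : ℕ → ℝ := fun j => ∑ i ∈ Icc (m - j) (m - 1), a i with hs
  have hθs : ∀ j ≤ m - 1, θ j = arctan (s j / H) := by
    intro j hj
    rcases j.eq_zero_or_pos with rfl | hj0
    · simp [hθ, hs, Icc_eq_empty_of_lt (show m - 1 < m by omega)]
    · have := hrange j hj0 hj
      exact (arctan_eq_of_tan_eq (htan j hj0 hj) ⟨by linarith [this.1, pi_pos], this.2⟩).symm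
  have hφ : ∀ j, φ' (j + 1) = θ (j + 1) - θ j := fun j => by
    simp only [hθ, sum_Icc_succ_top (Nat.le_add_left 1 j), add_sub_cancel_left]
  have hs_succ : ∀ j < m, s (j + 1) = a (m - (j + 1)) + s j := fun j hj =>
    sum_Icc_sub_succ_eq_add a hj
  have hs_nonneg : 0 ≤ s k := sum_nonneg fun i hi =>
    (hapos i (by have := (mem_Icc.mp hi).1; omega) (mem_Icc.mp hi).2).le
  have hgap_pos : 0 < a (m - (k + 1)) := hapos _ (by omega) (by omega)
  have hgap_anti : a (m - (k + 1 + 1)) ≤ a (m - (k + 1)) := by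
    have := hamono (m - (k + 1 + 1)) (by omega) (by omega)
    rwa [show m - (k + 1 + 1) + 1 = m - (k + 1) by omega] at this
  rw [hφ, hφ, hθs _ (by omega), hθs _ (by omega), hθs _ (by omega)]
  refine arctan_sub_lt_arctan_sub (by positivity) ?_ ?_
  · rw [hs_succ k (by omega)]
    gcongr
    linarith
  · rw [hs_succ (k + 1) (by omega), hs_succ k (by omega)]
    field_simp
    linarith

/-- Let `H > 0` and `0 < a 1 ≤ a 2 ≤ ⋯ ≤ a (m-1)` with total sum at most `H`.  Define the
angles `φ' k` (for `k = 1, …, m-1`) by `tan (φ' 1 + ⋯ + φ' k) = (a (m-1) + ⋯ + a (m-k)) / H`,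
each partial sum lying in `(0, π/2)`.  Then `φ' k > φ' (k+1)` for all `1 ≤ k ≤ m-2`. -/
theorem phi_strict_anti (m : ℕ) (hm : 2 ≤ m) (H : ℝ) (hH : 0 < H)
    (a φ' : ℕ → ℝ)
    (hapos : ∀ i : ℕ, 1 ≤ i → i ≤ m - 1 → 0 < a i)
    (hamono : ∀ i : ℕ, 1 ≤ i → i + 1 ≤ m - 1 → a i ≤ a (i + 1))
    (hasum : ∑ i ∈ Finset.Icc 1 (m - 1), a i ≤ H)
    (hrange : ∀ k : ℕ, 1 ≤ k → k ≤ m - 1 →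
      (∑ j ∈ Finset.Icc 1 k, φ' j) ∈ Set.Ioo 0 (π / 2))
    (htan : ∀ k : ℕ, 1 ≤ k → k ≤ m - 1 →
      Real.tan (∑ j ∈ Finset.Icc 1 k, φ' j) = (∑ j ∈ Finset.Icc (m - k) (m - 1), a j) / H) :
    ∀ k : ℕ, 1 ≤ k → k ≤ m - 2 → φ' (k + 1) < φ' k :=
  phi_strict_anti_general m H hH a φ' hapos hamono hrange htan
end

section
/- Let H > 0, m ≥ 2, φ = π/(4(m−1)), a_i = H(tan(iφ) − tan((i−1)φ)) for i = 1, …, m−1, and let φ'_{m−1} be the angle defined by tan φ'_{m−1} = H·a₁ / (H² + (a₁+⋯+a_{m−1})(a₂+⋯+a_{m−1})). Then φ'_{m−1} ≥ φ/2. -/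
/-!
The `a i` telescope, so `a₁ + ⋯ + a_{m-1} = H tan ((m-1)φ) = H tan (π/4) = H` and
`a₂ + ⋯ + a_{m-1} = H - a₁`. Hence `tan φ' = a₁ / (2H - a₁) = tan φ / (2 - tan φ)`, which is at
least `tan φ / 2`, and this exceeds `tan (φ/2)` because `tan φ = 2t / (1 - t²) > 2t` for
`t = tan (φ/2) ∈ (0, 1)`.
-/

open Real Finset

namespace Finset

variable {M : Type*} [AddCommGroup M]

theorem sum_Icc_one_eq_sub {a : ℕ → M} (g : ℕ → M) (h : ∀ i, a (i + 1) = g (i + 1) - g i)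
    (n : ℕ) : ∑ i ∈ Icc 1 n, a i = g n - g 0 := by
  induction n with
  | zero => simp
  | succ n ih => rw [sum_Icc_succ_top (by omega), ih, h]; abel

theorem sum_Icc_two_eq_sub (a : ℕ → M) {n : ℕ} (hn : 1 ≤ n) :
    ∑ i ∈ Icc 2 n, a i = ∑ i ∈ Icc 1 n, a i - a 1 := by
  rw [← add_sum_Ioc_eq_sum_Icc hn, ← Icc_add_one_left_eq_Ioc]
  exact (add_sub_cancel_left _ _).symm

end Finset

namespace Real

theorem sum_Icc_one_eq_mul_tan {H φ : ℝ} {a : ℕ → ℝ}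
    (ha : ∀ i : ℕ, 1 ≤ i → a i = H * (tan (i * φ) - tan (((i : ℝ) - 1) * φ))) (n : ℕ) :
    ∑ i ∈ Icc 1 n, a i = H * tan (n * φ) := by
  rw [sum_Icc_one_eq_sub (fun k => H * tan (k * φ)) fun i => by
    rw [ha _ (by omega)]; push_cast; rw [add_sub_cancel_right]; ring]
  simp

theorem tan_half_lt_half_tan {x : ℝ} (h0 : 0 < x) (h1 : x < π / 2) :
    tan (x / 2) < tan x / 2 := by
  set t := tan (x / 2)
  have ht0 : 0 < t := tan_pos_of_pos_of_lt_pi_div_two (by linarith) (by linarith)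
  have ht1 : t < 1 := by
    rw [← tan_pi_div_four]
    exact tan_lt_tan_of_nonneg_of_lt_pi_div_two (by linarith) (by linarith) (by linarith)
  have htan : tan x = 2 * t / (1 - t ^ 2) := by rw [← tan_two_mul]; ring_nf
  rw [htan, div_div, lt_div_iff₀ (by nlinarith)]
  nlinarith [pow_pos ht0 3]

theorem tan_half_lt_tan_div_two_sub_tan {x : ℝ} (h0 : 0 < x) (h1 : x ≤ π / 4) :
    tan (x / 2) < tan x / (2 - tan x) := by
  have ht0 : 0 < tan x := tan_pos_of_pos_of_lt_pi_div_two h0 (by linarith [pi_pos])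
  have ht1 : tan x ≤ 1 := by
    rw [← tan_pi_div_four]
    exact strictMonoOn_tan.monotoneOn ⟨by linarith, by linarith⟩
      ⟨by linarith [pi_pos], by linarith [pi_pos]⟩ h1
  calc tan (x / 2) < tan x / 2 := tan_half_lt_half_tan h0 (by linarith [pi_pos])
    _ ≤ tan x / (2 - tan x) := div_le_div_of_nonneg_left ht0.le (by linarith) (by linarith)

end Real

/-- Key quantitative lemma for the 2-layered drawing of `K_{m,n}`: with `H > 0`, `m ≥ 2`,
`φ = π/(4(m-1))`, `a i = H (tan (i φ) - tan ((i-1) φ))`, and `φ'` the angle in `(0, π/2)`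
with `tan φ' = H a₁ / (H² + (a₁ + ⋯ + a_{m-1})(a₂ + ⋯ + a_{m-1}))`, we have `φ' ≥ φ/2`. -/
theorem phi_last_ge_half (m : ℕ) (hm : 2 ≤ m) (H : ℝ) (hH : 0 < H)
    (φ : ℝ) (hφ : φ = π / (4 * ((m : ℝ) - 1)))
    (a : ℕ → ℝ)
    (ha : ∀ i : ℕ, 1 ≤ i → a i = H * (Real.tan (i * φ) - Real.tan (((i : ℝ) - 1) * φ)))
    (φ' : ℝ) (hrange : φ' ∈ Set.Ioo 0 (π / 2))
    (htan : Real.tan φ' = H * a 1 /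
      (H ^ 2 + (∑ i ∈ Finset.Icc 1 (m - 1), a i) * (∑ i ∈ Finset.Icc 2 (m - 1), a i))) :
    φ / 2 ≤ φ' := by
  have hk : ((m - 1 : ℕ) : ℝ) = m - 1 := by rw [Nat.cast_sub (by omega), Nat.cast_one]
  have hk1 : (1 : ℝ) ≤ m - 1 := by rw [← hk]; exact_mod_cast (by omega : 1 ≤ m - 1)
  have hmφ : ((m - 1 : ℕ) : ℝ) * φ = π / 4 := by rw [hk, hφ]; field_simp
  have hφ0 : 0 < φ := by rw [hφ]; exact div_pos pi_pos (by linarith)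
  have hφ4 : φ ≤ π / 4 := by rw [← hmφ, hk]; nlinarith
  have hsum : ∑ i ∈ Icc 1 (m - 1), a i = H := by
    rw [sum_Icc_one_eq_mul_tan ha, hmφ, tan_pi_div_four, mul_one]
  have ha1 : a 1 = H * tan φ := by simpa using sum_Icc_one_eq_mul_tan ha 1
  have htan' : tan φ' = tan φ / (2 - tan φ) := by
    rw [htan, sum_Icc_two_eq_sub a (by omega), hsum, ha1]
    field_simp
    ring
  have key : tan (φ / 2) < tan φ' := htan' ▸ tan_half_lt_tan_div_two_sub_tan hφ0 hφ4
  exact (strictMonoOn_tan.lt_iff_lt ⟨by linarith [pi_pos], by linarith [pi_pos]⟩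
    ⟨by linarith [hrange.1, pi_pos], hrange.2⟩).1 key |>.le
end

section
/- In the 2-layered drawing of K_{m,n} with the parts on two horizontal lines y = 0 and y = H, any two crossing edges form crossing angles whose acute angle is strictly larger than some angle between two edges sharing an endpoint; hence the crossing resolution of any 2-layered straight-line drawing of a bipartite graph is at least its angular resolution. -/
/-!
The edges `u₁v₂` and `u₂v₁` cross at `c`, so `∠ v₁ c v₂` is the exterior angle at `c` of the
triangle `u₂ c v₂`; it is therefore the sum `A + B` of the vertex angles at `u₂` and `v₂`, both of
which are positive because each has its two other endpoints on the opposite layer. The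
supplementary crossing angle is `π - (A + B)`. Since `v₁ - c` and `v₂ - c` are positive multiples
of `v₁ - u₂` and `v₂ - u₁`, whose horizontal components are at most `H` in absolute value while
their vertical components both equal `H`, the crossing angle `∠ v₁ c v₂` is at most `π / 2`, so
both crossing angles are at least `A + B > min A B`.
-/

open Real EuclideanGeometry RealInnerProductSpace

theorem Sbtw.of_mem_openSegment {V : Type*} [AddCommGroup V] [Module ℝ V] {x y z : V}
    (hy : y ∈ openSegment ℝ x z) (hxz : x ≠ z) : Sbtw ℝ x y z :=
  sbtw_iff_mem_image_Ioo_and_ne.2 ⟨openSegment_eq_image_lineMap ℝ x z ▸ hy, hxz⟩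

theorem InnerProductGeometry.angle_le_pi_div_two_of_inner_nonneg {V : Type*}
    [NormedAddCommGroup V] [InnerProductSpace ℝ V] {x y : V} (h : 0 ≤ ⟪x, y⟫) :
    InnerProductGeometry.angle x y ≤ π / 2 :=
  Real.arccos_le_pi_div_two.2 (div_nonneg h (by positivity))

section Affine

variable {V P : Type*} [NormedAddCommGroup V] [InnerProductSpace ℝ V] [MetricSpace P]
  [NormedAddTorsor V P] {u₁ u₂ v₁ v₂ c : P}

theorem EuclideanGeometry.angle_eq_angle_add_angle_of_sbtw_of_sbtw (h₁ : Sbtw ℝ u₁ c v₂)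
    (h₂ : Sbtw ℝ u₂ c v₁) : ∠ v₁ c v₂ = ∠ v₁ u₂ v₂ + ∠ u₁ v₂ u₂ := by
  rw [angle_comm, exterior_angle_eq_angle_add_angle v₁ h₂.symm, h₁.symm.angle_eq_left u₂,
    h₂.angle_eq_right v₂, angle_comm v₂ u₂ v₁, add_comm]

theorem EuclideanGeometry.angle_eq_angle_vsub_of_sbtw_of_sbtw (h₁ : Sbtw ℝ u₁ c v₂)
    (h₂ : Sbtw ℝ u₂ c v₁) :
    ∠ v₁ c v₂ = InnerProductGeometry.angle (v₁ -ᵥ u₂) (v₂ -ᵥ u₁) := by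
  obtain ⟨s, hs, hcs⟩ := h₂.mem_image_Ioo
  obtain ⟨t, ht, hct⟩ := h₁.mem_image_Ioo
  rw [angle, ← hcs, AffineMap.right_vsub_lineMap, hcs, ← hct, AffineMap.right_vsub_lineMap,
    InnerProductGeometry.angle_smul_left_of_pos _ _ (sub_pos.2 hs.2),
    InnerProductGeometry.angle_smul_right_of_pos _ _ (sub_pos.2 ht.2)]

end Affine

theorem EuclideanGeometry.angle_pos_of_apply_eq_of_apply_ne {ι : Type*} [Fintype ι]
    {p q r : EuclideanSpace ℝ ι} {i : ι} (hpr : p ≠ r) (hi : p i = r i) (hq : q i ≠ p i) :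
    0 < ∠ p q r := by
  refine (angle_nonneg p q r).lt_of_ne fun h => hpr ?_
  obtain ⟨-, s, -, hs⟩ := InnerProductGeometry.angle_eq_zero_iff.1 h.symm
  have hs_i : r i - q i = s * (p i - q i) := by simpa using congrArg (· i) hs
  have hs_one : s = 1 := by
    rw [← hi] at hs_i
    exact (mul_eq_right₀ (sub_ne_zero.2 hq.symm)).1 hs_i.symm
  rw [hs_one, one_smul] at hs
  exact (vsub_left_cancel hs).symm

theorem angle_vsub_le_pi_div_two_of_mem_square {H : ℝ} {u₁ u₂ v₁ v₂ : EuclideanSpace ℝ (Fin 2)}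
    (hu₁y : u₁ 1 = 0) (hu₂y : u₂ 1 = 0) (hv₁y : v₁ 1 = H) (hv₂y : v₂ 1 = H)
    (hu₁x : u₁ 0 ∈ Set.Icc 0 H) (hu₂x : u₂ 0 ∈ Set.Icc 0 H)
    (hv₁x : v₁ 0 ∈ Set.Icc 0 H) (hv₂x : v₂ 0 ∈ Set.Icc 0 H) :
    InnerProductGeometry.angle (v₁ -ᵥ u₂) (v₂ -ᵥ u₁) ≤ π / 2 := by
  refine InnerProductGeometry.angle_le_pi_div_two_of_inner_nonneg ?_
  have hinner : ⟪v₁ -ᵥ u₂, v₂ -ᵥ u₁⟫ =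
      (v₁ 0 - u₂ 0) * (v₂ 0 - u₁ 0) + (v₁ 1 - u₂ 1) * (v₂ 1 - u₁ 1) := by
    simp only [vsub_eq_sub, EuclideanSpace.inner_eq_star_dotProduct, dotProduct, PiLp.sub_apply,
      WithLp.ofLp_sub, Pi.star_apply, Pi.sub_apply, star_trivial, Fin.sum_univ_two]
    ring
  rw [hinner, hu₁y, hu₂y, hv₁y, hv₂y]
  nlinarith [hu₁x.1, hu₁x.2, hu₂x.1, hu₂x.2, hv₁x.1, hv₁x.2, hv₂x.1, hv₂x.2]

/-- In the 2-layered drawing of `K_{m,n}` with the parts on the horizontal lines `y = 0` and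
`y = H` (and within a square of side `H`, as in the construction), if the edges `u₁v₂` and
`u₂v₁` cross at `c`, then the crossing angle `∠ v₁ c v₂` equals the sum of the two vertex
angles `∠ v₁ u₂ v₂` and `∠ u₁ v₂ u₂`, and the acute angle at the crossing (the minimum of the
two supplementary crossing angles) is strictly larger than some angle between two edges
sharing an endpoint; hence the crossing resolution is at least the angular resolution. -/
theorem two_layered_crossing_ge_angular (H : ℝ) (hH : 0 < H)
    (u₁ u₂ v₁ v₂ c : EuclideanSpace ℝ (Fin 2))
    (hu₁y : u₁ 1 = 0) (hu₂y : u₂ 1 = 0) (hv₁y : v₁ 1 = H) (hv₂y : v₂ 1 = H)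
    (hu₁x : u₁ 0 ∈ Set.Icc 0 H) (hu₂x : u₂ 0 ∈ Set.Icc 0 H)
    (hv₁x : v₁ 0 ∈ Set.Icc 0 H) (hv₂x : v₂ 0 ∈ Set.Icc 0 H)
    (hu : u₁ ≠ u₂) (hv : v₁ ≠ v₂)
    (hc₁ : c ∈ openSegment ℝ u₁ v₂) (hc₂ : c ∈ openSegment ℝ u₂ v₁) :
    ∠ v₁ c v₂ = ∠ v₁ u₂ v₂ + ∠ u₁ v₂ u₂ ∧
    min (∠ v₁ c v₂) (∠ v₁ c u₁) >
      min (min (∠ v₁ u₂ v₂) (∠ u₁ v₂ u₂)) (min (∠ v₂ u₁ v₁) (∠ u₂ v₁ u₁)) := by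
  have hlayers {u v : EuclideanSpace ℝ (Fin 2)} (hu : u 1 = 0) (hv : v 1 = H) : u ≠ v :=
    fun h => hH.ne (by rw [← hv, ← h, hu])
  have h₁ := Sbtw.of_mem_openSegment hc₁ (hlayers hu₁y hv₂y)
  have h₂ := Sbtw.of_mem_openSegment hc₂ (hlayers hu₂y hv₁y)
  have hext := angle_eq_angle_add_angle_of_sbtw_of_sbtw h₁ h₂
  have hsupp : ∠ v₁ c u₁ + ∠ v₁ c v₂ = π :=
    angle_add_angle_eq_pi_of_angle_eq_pi v₁ h₁.angle₁₂₃_eq_pi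
  have hacute : ∠ v₁ c v₂ ≤ π / 2 := by
    rw [angle_eq_angle_vsub_of_sbtw_of_sbtw h₁ h₂]
    exact angle_vsub_le_pi_div_two_of_mem_square hu₁y hu₂y hv₁y hv₂y hu₁x hu₂x hv₁x hv₂x
  have hA : 0 < ∠ v₁ u₂ v₂ :=
    angle_pos_of_apply_eq_of_apply_ne hv (hv₁y.trans hv₂y.symm) (by rw [hu₂y, hv₁y]; exact hH.ne)
  have hB : 0 < ∠ u₁ v₂ u₂ :=
    angle_pos_of_apply_eq_of_apply_ne hu (hu₁y.trans hu₂y.symm) (by rw [hu₁y, hv₂y]; exact hH.ne')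
  refine ⟨hext, lt_min ?_ ?_⟩ <;>
    linarith [min_le_left (min (∠ v₁ u₂ v₂) (∠ u₁ v₂ u₂)) (min (∠ v₂ u₁ v₁) (∠ u₂ v₁ u₁)),
      min_le_left (∠ v₁ u₂ v₂) (∠ u₁ v₂ u₂)]
end

section
/- The 2-layered grid drawing of K_{m,n} obtained by scaling the construction so that a₁ = 1 and snapping each vertex to the nearest grid point to its left (and the top line to the grid line above) has width and height O(max{m,n}), hence area O(max{m², n²}), while its total resolution remains Θ(1/max{m,n}). -/
/-!
Place the part of size `m` at the grid points `(i, 0)`, `0 ≤ i < m`, and the part of size `n` at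
`(j, N)`, `0 ≤ j < n`, where `N = max m n`. Every edge is then parallel to a vector `(a, N)` with
`|a| ≤ N`, of length at most `√2 N`. Two edges sharing an endpoint, or crossing, have integer
directions `(a, N) ≠ (b, N)`, whose determinant `N (a - b)` is at least `N` in absolute value;
hence the sine of the angle between them is at least `N / (2 N²) = 1 / (2N)`, and so are both
the angle `θ` and its supplement `π - θ` (the other angle at a crossing). Conversely the two
edges from `(0, 0)` to `(0, N)` and `(1, N)` make the angle `arctan (1 / N) ≤ 1 / N`.
-/

open Real EuclideanGeometry
open InnerProductGeometry (angle_add_eq_arctan_of_inner_eq_zero angle_le_pi angle_neg_neg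
  angle_neg_right angle_nonneg angle_smul_left_of_pos angle_smul_right_of_pos
  sin_angle_mul_norm_mul_norm sin_angle_nonneg)

theorem Real.arctan_le_self {x : ℝ} (hx : 0 ≤ x) : arctan x ≤ x :=
  (le_tan (arctan_nonneg.2 hx) (arctan_lt_pi_div_two x)).trans_eq (tan_arctan x)

theorem InnerProductGeometry.le_angle_of_le_sin_angle {V : Type*} [NormedAddCommGroup V]
    [InnerProductSpace ℝ V] {x y : V} {c : ℝ} (hc : c ≤ sin (angle x y)) :
    c ≤ angle x y ∧ c ≤ π - angle x y :=
  ⟨hc.trans (sin_le (angle_nonneg x y)),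
    (sin_pi_sub (angle x y) ▸ hc).trans (sin_le (sub_nonneg.2 (angle_le_pi x y)))⟩

theorem angle_eq_of_mem_openSegment {V : Type*} [NormedAddCommGroup V] [InnerProductSpace ℝ V]
    {p q p' q' x : V} (hx : x ∈ openSegment ℝ p q) (hx' : x ∈ openSegment ℝ p' q') :
    ∠ q x q' = InnerProductGeometry.angle (q - p) (q' - p') ∧
      ∠ q x p' = π - InnerProductGeometry.angle (q - p) (q' - p') := by
  rw [openSegment_eq_image'] at hx hx'
  obtain ⟨t, ⟨-, ht⟩, rfl⟩ := hx
  obtain ⟨t', ⟨ht'0, ht'⟩, hxx'⟩ := hx'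
  beta_reduce at hxx'
  have hq : q - (p + t • (q - p)) = (1 - t) • (q - p) := by module
  have hq' : q' - (p + t • (q - p)) = (1 - t') • (q' - p') := by rw [← hxx']; module
  have hp' : p' - (p + t • (q - p)) = t' • -(q' - p') := by rw [← hxx']; module
  simp only [EuclideanGeometry.angle, vsub_eq_sub, hq, hq', hp',
    angle_smul_left_of_pos _ _ (sub_pos.2 ht), angle_smul_right_of_pos _ _ (sub_pos.2 ht'),
    angle_smul_right_of_pos _ _ ht'0, angle_neg_right, and_self]

namespace EuclideanSpace

theorem norm_vec2 (a b : ℝ) : ‖!₂[a, b]‖ = √(a ^ 2 + b ^ 2) := by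
  simp [EuclideanSpace.norm_eq, Fin.sum_univ_two]

theorem sin_angle_mul_norm_mul_norm_eq_abs_det (x y : EuclideanSpace ℝ (Fin 2)) :
    sin (InnerProductGeometry.angle x y) * (‖x‖ * ‖y‖) = |x 0 * y 1 - x 1 * y 0| := by
  rw [sin_angle_mul_norm_mul_norm, ← sqrt_sq_eq_abs]
  congr 1
  simp only [PiLp.inner_apply, Fin.sum_univ_two, RCLike.inner_apply, conj_trivial]
  ring

theorem angle_vec2_eq_arctan {h : ℝ} (hh : 0 < h) (a : ℝ) :
    InnerProductGeometry.angle !₂[0, h] !₂[a, h] = arctan (|a| / h) := by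
  have hsplit : !₂[a, h] = !₂[0, h] + !₂[a, 0] := by
    ext i; fin_cases i <;> simp
  rw [hsplit, angle_add_eq_arctan_of_inner_eq_zero (by simp [PiLp.inner_apply, Fin.sum_univ_two])
    (fun h0 => hh.ne' (by simpa using congrArg (· 1) h0)), norm_vec2, norm_vec2]
  simp [sqrt_sq_eq_abs, abs_of_pos hh]

theorem one_div_two_mul_le_sin_angle {a b h : ℝ} (ha : |a| ≤ h) (hb : |b| ≤ h)
    (hab : 1 ≤ |a - b|) : 1 / (2 * h) ≤ sin (InnerProductGeometry.angle !₂[a, h] !₂[b, h]) := by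
  have hh : 0 < h := by linarith [abs_sub a b]
  have ha2 : a ^ 2 ≤ h ^ 2 := sq_le_sq' (abs_le.mp ha).1 (abs_le.mp ha).2
  have hb2 : b ^ 2 ≤ h ^ 2 := sq_le_sq' (abs_le.mp hb).1 (abs_le.mp hb).2
  have hnorm : ‖!₂[a, h]‖ * ‖!₂[b, h]‖ ≤ 2 * h ^ 2 := by
    rw [norm_vec2, norm_vec2, ← sqrt_mul (by positivity), sqrt_le_left (by positivity)]
    nlinarith
  have hdet : |a * h - h * b| = h * |a - b| := by
    rw [show a * h - h * b = h * (a - b) by ring, abs_mul, abs_of_pos hh]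
  have hsin := sin_angle_mul_norm_mul_norm_eq_abs_det !₂[a, h] !₂[b, h]
  simp only [Matrix.cons_val_zero, Matrix.cons_val_one, hdet] at hsin
  have := sin_angle_nonneg !₂[a, h] !₂[b, h]
  rw [div_le_iff₀ (by positivity)]
  nlinarith

end EuclideanSpace

theorem sub_ne_sub_of_mem_openSegment {a b a' b' h : ℝ} {x : EuclideanSpace ℝ (Fin 2)}
    (hh : h ≠ 0) (ha : a ≠ a') (hx : x ∈ openSegment ℝ !₂[a, 0] !₂[b, h])
    (hx' : x ∈ openSegment ℝ !₂[a', 0] !₂[b', h]) : b - a ≠ b' - a' := by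
  rw [openSegment_eq_image'] at hx hx'
  obtain ⟨t, -, rfl⟩ := hx
  obtain ⟨t', -, hxx'⟩ := hx'
  beta_reduce at hxx'
  have hy := congrArg (· 1) hxx'
  have hx := congrArg (· 0) hxx'
  simp only [Fin.isValue, PiLp.add_apply, Matrix.cons_val_one, Matrix.cons_val_fin_one,
    PiLp.smul_apply, PiLp.sub_apply, sub_zero, smul_eq_mul, zero_add, mul_eq_mul_right_iff,
    Matrix.cons_val_zero] at hy hx
  intro hpar
  obtain rfl : t' = t := hy.resolve_right hh
  exact ha (by linear_combination -hx - t' * hpar)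

theorem one_div_two_mul_le_sin_angle_layer_edges {N i j i' j' : ℕ} (hi : i ≤ N) (hj : j ≤ N)
    (hi' : i' ≤ N) (hj' : j' ≤ N) (hne : (j : ℝ) - i ≠ j' - i') :
    1 / (2 * N) ≤ sin (InnerProductGeometry.angle (!₂[(j : ℝ), N] - !₂[(i : ℝ), 0])
      (!₂[(j' : ℝ), N] - !₂[(i' : ℝ), 0])) := by
  have hsub (a b c d : ℝ) : !₂[a, b] - !₂[c, d] = !₂[a - c, b - d] := by
    ext k; fin_cases k <;> simp
  have hwidth {k l : ℕ} (hk : k ≤ N) (hl : l ≤ N) : |(l : ℝ) - k| ≤ N :=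
    abs_sub_le_of_nonneg_of_le (by positivity) (by exact_mod_cast hl) (by positivity)
      (by exact_mod_cast hk)
  have hgap : ((j : ℤ) - i - (j' - i') : ℤ) ≠ 0 := by exact_mod_cast sub_ne_zero.2 hne
  rw [hsub, hsub, sub_zero]
  exact EuclideanSpace.one_div_two_mul_le_sin_angle (hwidth hi hj) (hwidth hi' hj')
    (by exact_mod_cast Int.one_le_abs hgap)

/-- The 2-layered grid drawing of `K_{m,n}` obtained by scaling the construction so that
`a₁ = 1` and snapping vertices to grid points: there are absolute constants `C, c > 0` such
that for all `m, n ≥ 2` the complete bipartite graph `K_{m,n}` admits a 2-layered drawing with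
all vertices on grid points of a grid of width and height `O(max{m,n})` (hence area
`O(max{m², n²})`), whose total resolution (every angle between two edges sharing an endpoint
and every angle at a crossing of two independent edges) is at least `c / max{m,n}`, and which
moreover has some vertex angle at most `C / max{m,n}` (so the total resolution is
`Θ(1/max{m,n})`). -/
theorem grid_drawing_complete_bipartite :
    ∃ C c : ℝ, 0 < C ∧ 0 < c ∧ ∀ m n : ℕ, 2 ≤ m → 2 ≤ n →
      ∃ (U : Fin m → ℤ × ℤ) (V : Fin n → ℤ × ℤ) (h : ℕ)
        (P : Fin m → EuclideanSpace ℝ (Fin 2)) (Q : Fin n → EuclideanSpace ℝ (Fin 2)),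
        Function.Injective U ∧ Function.Injective V ∧
        -- the two layers: part `U` on the grid line `y = 0`, part `V` on `y = h`
        (∀ i, (U i).2 = 0) ∧ (∀ j, (V j).2 = (h : ℤ)) ∧
        (∀ i, P i = (EuclideanSpace.equiv (Fin 2) ℝ).symm
          ![((U i).1 : ℝ), ((U i).2 : ℝ)]) ∧
        (∀ j, Q j = (EuclideanSpace.equiv (Fin 2) ℝ).symm
          ![((V j).1 : ℝ), ((V j).2 : ℝ)]) ∧
        -- width and height are `O(max{m,n})`, hence area `O(max{m²,n²})`
        (∀ i, 0 ≤ (U i).1 ∧ ((U i).1 : ℝ) ≤ C * (max m n : ℕ)) ∧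
        (∀ j, 0 ≤ (V j).1 ∧ ((V j).1 : ℝ) ≤ C * (max m n : ℕ)) ∧
        ((h : ℝ) ≤ C * (max m n : ℕ)) ∧
        -- angular resolution at least `c / max{m,n}`
        (∀ i : Fin m, ∀ j j' : Fin n, j ≠ j' →
          c / (max m n : ℕ) ≤ ∠ (Q j) (P i) (Q j')) ∧
        (∀ j : Fin n, ∀ i i' : Fin m, i ≠ i' →
          c / (max m n : ℕ) ≤ ∠ (P i) (Q j) (P i')) ∧
        -- crossing resolution at least `c / max{m,n}`
        (∀ (i i' : Fin m) (j j' : Fin n) (x : EuclideanSpace ℝ (Fin 2)), i ≠ i' → j ≠ j' →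
          x ∈ openSegment ℝ (P i) (Q j) → x ∈ openSegment ℝ (P i') (Q j') →
          c / (max m n : ℕ) ≤ ∠ (Q j) x (Q j') ∧ c / (max m n : ℕ) ≤ ∠ (Q j) x (P i')) ∧
        -- and the total resolution is `O(1/max{m,n})` as well
        (∃ (i : Fin m) (j j' : Fin n), j ≠ j' ∧
          ∠ (Q j) (P i) (Q j') ≤ C / (max m n : ℕ)) := by
  refine ⟨1, 1 / 2, one_pos, one_half_pos, fun m n hm hn => ?_⟩
  set N := max m n
  have hi (i : Fin m) : (i : ℕ) ≤ N := i.2.le.trans (le_max_left m n)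
  have hj (j : Fin n) : (j : ℕ) ≤ N := j.2.le.trans (le_max_right m n)
  have le_angle {u v : EuclideanSpace ℝ (Fin 2)}
      (hsin : 1 / (2 * N) ≤ sin (InnerProductGeometry.angle u v)) :=
    InnerProductGeometry.le_angle_of_le_sin_angle (div_div (1 : ℝ) 2 N ▸ hsin)
  refine ⟨fun i => ((i : ℤ), 0), fun j => ((j : ℤ), N), N, fun i => !₂[(i : ℝ), 0],
    fun j => !₂[(j : ℝ), N], fun i i' h => Fin.ext (by simpa using h),
    fun j j' h => Fin.ext (by simpa using h), fun _ => rfl, fun _ => rfl, fun _ => by simp,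
    fun _ => by simp, fun i => ⟨by positivity, by simpa using hi i⟩,
    fun j => ⟨by positivity, by simpa using hj j⟩, by simp, ?_, ?_, ?_, ?_⟩
  · intro i j j' hjj'
    exact (le_angle (one_div_two_mul_le_sin_angle_layer_edges (hi i) (hj j) (hi i) (hj j')
      (by simpa [Fin.val_inj] using hjj'))).1
  · intro j i i' hii'
    rw [EuclideanGeometry.angle, ← angle_neg_neg]
    simp only [vsub_eq_sub, neg_sub]
    exact (le_angle (one_div_two_mul_le_sin_angle_layer_edges (hi i) (hj j) (hi i') (hj j)
      (by simpa [Fin.val_inj] using hii'))).1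
  · intro i i' j j' x hii' _ hx hx'
    obtain ⟨hQQ, hQP⟩ := angle_eq_of_mem_openSegment hx hx'
    rw [hQQ, hQP]
    exact le_angle (one_div_two_mul_le_sin_angle_layer_edges (hi i) (hj j) (hi i') (hj j')
      (sub_ne_sub_of_mem_openSegment (by positivity) (by simpa [Fin.val_inj] using hii') hx hx'))
  · refine ⟨⟨0, by omega⟩, ⟨0, by omega⟩, ⟨1, by omega⟩, by simp, ?_⟩
    have hzero : !₂[(0 : ℝ), 0] = 0 := by ext k; fin_cases k <;> rfl
    simp only [EuclideanGeometry.angle, vsub_eq_sub, CharP.cast_eq_zero, Nat.cast_one, hzero,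
      sub_zero]
    rw [EuclideanSpace.angle_vec2_eq_arctan (by positivity), abs_one]
    exact arctan_le_self (by positivity)
end
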